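/- In the N-partite canonical scenario where exactly one party (say party 1) lacks a friend and has n inputs, while each of the other N−1 parties has a friend and exactly 2 inputs, every Local Friendliness behaviour is LHV-modelable (LF(S) = B(S)). -/

import Mathlib

open Finset MeasureTheory

section Framework

variable {I : Type} [Fintype I] [DecidableEq I]
  {M : I → Type} [∀ i, Fintype (M i)] [∀ i, DecidableEq (M i)]
  {O : I → Type} [∀ i, Fintype (O i)] [∀ i, DecidableEq (O i)]

/-- A behaviour: a family of probability distributions over joint outcomes, one per input tuple. -/
def IsBehaviour (p : (∀ i, M i) → (∀ i, O i) → ℝ) : Prop :=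
  (∀ x a, 0 ≤ p x a) ∧ ∀ x, ∑ a, p x a = 1

/-- No-signalling: the marginal over party `i`'s outcome does not depend on party `i`'s input. -/
def NoSignalling (p : (∀ i, M i) → (∀ i, O i) → ℝ) : Prop :=
  ∀ (x x' : ∀ i, M i) (i : I), (∀ j, j ≠ i → x j = x' j) →
    ∀ a : ∀ i, O i,
      ∑ b : O i, p x (Function.update a i b) = ∑ b : O i, p x' (Function.update a i b)

/-- Local hidden variable model (measure-theoretic form): a probability measure on a hidden
variable space together with local response distributions. -/
def IsLHV (p : (∀ i, M i) → (∀ i, O i) → ℝ) : Prop :=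
  ∃ (Λ : Type) (_ : MeasurableSpace Λ) (μ : Measure Λ),
    IsProbabilityMeasure μ ∧
    ∃ R : (i : I) → M i → Λ → O i → ℝ,
      (∀ i xi l a, 0 ≤ R i xi l a) ∧
      (∀ i xi l, ∑ a, R i xi l a = 1) ∧
      (∀ i xi a, Measurable (fun l => R i xi l a)) ∧
      ∀ x a, p x a = ∫ l, (∏ i, R i (x i) l (a i)) ∂μ

/-- Fully deterministic separable model with finitely many hidden variables. -/
def IsLHVFin (p : (∀ i, M i) → (∀ i, O i) → ℝ) : Prop :=
  ∃ (k : ℕ) (w : Fin k → ℝ) (α : (i : I) → M i → Fin k → O i),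
    (∀ l, 0 ≤ w l) ∧ (∑ l, w l = 1) ∧
    ∀ x a, p x a = ∑ l, w l * ∏ i, (if a i = α i (x i) l then (1 : ℝ) else 0)

/-- `J` is a joint probability distribution over all potential outcomes of all measurements of
all parties which reproduces the behaviour `p` by marginalization. -/
def IsJointFor (p : (∀ i, M i) → (∀ i, O i) → ℝ) (J : (∀ i, M i → O i) → ℝ) : Prop :=
  (∀ g, 0 ≤ J g) ∧ (∑ g, J g = 1) ∧
  ∀ x a, p x a = ∑ g ∈ Finset.univ.filter (fun g : ∀ i, M i → O i => ∀ i, g i (x i) = a i), J g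

/-- Local Agency: the marginal on any subset `V` of parties depends only on the inputs of `V`. -/
def LocalAgency (q : (∀ i, M i) → (∀ i, O i) → ℝ) : Prop :=
  ∀ (V : Finset I) (x x' : ∀ i, M i), (∀ i ∈ V, x i = x' i) →
    ∀ a : ∀ i, O i,
      ∑ b ∈ Finset.univ.filter (fun b : ∀ i, O i => ∀ i ∈ V, b i = a i), q x b
        = ∑ b ∈ Finset.univ.filter (fun b : ∀ i, O i => ∀ i ∈ V, b i = a i), q x' b

/-- Local Friendliness decomposition for friend set `F`, where `one i` is the distinguished
(query) input of party `i`. -/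
def IsLF (F : Finset I) (one : ∀ i, M i)
    (p : (∀ i, M i) → (∀ i, O i) → ℝ) : Prop :=
  ∃ (P : (∀ i : {j // j ∈ F}, O i.1) → ℝ)
    (Q : (∀ i : {j // j ∈ F}, O i.1) → (∀ i, M i) → (∀ i, O i) → ℝ),
    (∀ c, 0 ≤ P c) ∧ (∑ c, P c = 1) ∧
    (∀ c x a, 0 ≤ Q c x a) ∧ (∀ c x, ∑ a, Q c x a = 1) ∧
    (∀ c, LocalAgency (Q c)) ∧
    (∀ c x a, (∃ i : {j // j ∈ F}, x i.1 = one i.1 ∧ a i.1 ≠ c i) → Q c x a = 0) ∧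
    ∀ x a, p x a = ∑ c, P c * Q c x a

end Framework

/-!
Fix the friends' outcomes `c`. In `Q c` a friend queried with `one` answers `c`, so the only
randomness of a friend sits at its other input. Local Agency makes the distributions at the
reference contexts (every friend at its other input, party `i₀` at `m`) share their marginal on
the friends; gluing them along that marginal, with the answers of `i₀` to its different inputs
conditionally independent given the friends' outcomes, gives a joint distribution of all
potential outcomes. It reproduces `Q c` at every context: Local Agency transfers the marginal on
`i₀` and the friends not queried, and the queried friends' outcomes are forced. Mixing these
joint distributions with weights `P c` gives one for the behaviour, which is then a
deterministic local hidden variable model.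
-/

section JointDistribution

variable {I : Type} [Fintype I] [DecidableEq I]
  {M : I → Type} [∀ i, Fintype (M i)] [∀ i, DecidableEq (M i)]
  {O : I → Type} [∀ i, Fintype (O i)] [∀ i, DecidableEq (O i)]
  {p : (∀ i, M i) → (∀ i, O i) → ℝ}

theorem IsJointFor.isLHVFin {J : (∀ i, M i → O i) → ℝ} (hJ : IsJointFor p J) : IsLHVFin p := by
  obtain ⟨hJ0, hJ1, hp⟩ := hJ
  let e := (Fintype.equivFin (∀ i, M i → O i)).symm
  refine ⟨_, fun l => J (e l), fun i xi l => e l i xi, fun l => hJ0 _, by rwa [e.sum_comp J],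
    fun x a => ?_⟩
  rw [hp, sum_filter, ← e.sum_comp]
  refine Fintype.sum_congr _ _ fun l => ?_
  simp only [Fintype.prod_boole, mul_ite, mul_one, mul_zero, @eq_comm _ (a _)]

theorem IsJointFor.sum_mul {ι : Type*} [Fintype ι] {P : ι → ℝ} (hP0 : ∀ c, 0 ≤ P c)
    (hP1 : ∑ c, P c = 1) {q : ι → (∀ i, M i) → (∀ i, O i) → ℝ} {J : ι → (∀ i, M i → O i) → ℝ}
    (hJ : ∀ c, IsJointFor (q c) (J c)) (hp : ∀ x a, p x a = ∑ c, P c * q c x a) :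
    IsJointFor p (fun g => ∑ c, P c * J c g) := by
  refine ⟨fun g => sum_nonneg fun c _ => mul_nonneg (hP0 c) ((hJ c).1 g), ?_, fun x a => ?_⟩
  · rw [sum_comm]
    simp_rw [← mul_sum, fun c => (hJ c).2.1, mul_one, hP1]
  · rw [hp, sum_comm]
    simp_rw [← mul_sum, ← (hJ _).2.2 x a]

theorem isJointFor_map {Λ : Type*} [Fintype Λ] {w : Λ → ℝ} (hw0 : ∀ l, 0 ≤ w l)
    (hw1 : ∑ l, w l = 1) (g : Λ → ∀ i, M i → O i)
    (hp : ∀ x a, p x a = ∑ l ∈ univ.filter (fun l => ∀ i, g l i (x i) = a i), w l) :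
    IsJointFor p (fun f => ∑ l ∈ univ.filter (fun l => g l = f), w l) := by
  refine ⟨fun f => sum_nonneg fun l _ => hw0 l, by rw [sum_fiberwise, hw1], fun x a => ?_⟩
  rw [hp, ← sum_fiberwise_of_maps_to (g := g) (t := univ.filter (fun f => ∀ i, f i (x i) = a i))
    (fun l hl => by simpa using hl)]
  refine sum_congr rfl fun f hf => ?_
  rw [filter_filter]
  refine sum_congr (filter_congr fun l _ => ?_) fun _ _ => rfl
  simp only [mem_filter, mem_univ, true_and] at hf
  exact ⟨And.right, by rintro rfl; exact ⟨hf, rfl⟩⟩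

end JointDistribution

section Coupling

variable {B M Y : Type*} [Fintype M]

theorem sum_filter_apply_eq_mul_prod_sum [DecidableEq M] [Fintype Y] [DecidableEq Y]
    (κ : M → Y → ℝ) (m : M) (y : Y) :
    ∑ d ∈ univ.filter (fun d : M → Y => d m = y), ∏ m', κ m' (d m')
      = κ m y * ∏ m' ∈ univ.erase m, ∑ y', κ m' y' := by
  rw [← Fintype.piFinset_univ, ← Fintype.piFinset_update_singleton_eq_filter_piFinset_eq
    (fun _ => univ) m (mem_univ y), ← prod_univ_sum, ← mul_prod_erase univ _ (mem_univ m)]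
  refine congrArg₂ _ (by simp) (prod_congr rfl fun m' hm' => ?_)
  rw [Function.update_of_ne (ne_of_mem_erase hm')]

/-- The law of `(b, d)` under which `b` has law `μ` and the `d m` are conditionally independent
given `b`, each with law `r m b · / μ b`. Where `μ b = 0` it is `0`, since then `x / 0 = 0`. -/
noncomputable def condIndepCoupling (μ : B → ℝ) (r : M → B → Y → ℝ) (b : B) (d : M → Y) : ℝ :=
  μ b * ∏ m, r m b (d m) / μ b

variable {μ : B → ℝ} {r : M → B → Y → ℝ}

theorem condIndepCoupling_nonneg (hμ : ∀ b, 0 ≤ μ b) (hr : ∀ m b y, 0 ≤ r m b y) (b : B)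
    (d : M → Y) : 0 ≤ condIndepCoupling μ r b d :=
  mul_nonneg (hμ b) (prod_nonneg fun m _ => div_nonneg (hr m b _) (hμ b))

theorem sum_condIndepCoupling [DecidableEq M] [Fintype Y] (hμ : ∀ m b, ∑ y, r m b y = μ b)
    (b : B) : ∑ d, condIndepCoupling μ r b d = μ b := by
  unfold condIndepCoupling
  rcases eq_or_ne (μ b) 0 with h0 | h0
  · simp [h0]
  · rw [← mul_sum, ← Fintype.prod_sum (fun m y => r m b y / μ b)]
    simp_rw [← sum_div, hμ, div_self h0, prod_const_one, mul_one]

theorem sum_filter_condIndepCoupling [DecidableEq M] [Fintype Y] [DecidableEq Y]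
    (hr : ∀ m b y, 0 ≤ r m b y) (hμ : ∀ m b, ∑ y, r m b y = μ b) (b : B) (m : M) (y : Y) :
    ∑ d ∈ univ.filter (fun d : M → Y => d m = y), condIndepCoupling μ r b d = r m b y := by
  unfold condIndepCoupling
  rcases eq_or_ne (μ b) 0 with h0 | h0
  · have hy : r m b y = 0 :=
      (sum_eq_zero_iff_of_nonneg fun y _ => hr m b y).1 (by rw [hμ, h0]) y (mem_univ y)
    simp [h0, hy]
  · rw [← mul_sum, sum_filter_apply_eq_mul_prod_sum (fun m y => r m b y / μ b)]
    simp_rw [← sum_div, hμ, div_self h0, prod_const_one, mul_one]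
    exact mul_div_cancel₀ _ h0

end Coupling

theorem Equiv.forall_piSplitAt_symm_apply_iff {α : Type*} [DecidableEq α] {β : α → Type*}
    (i₀ : α) (P : ∀ i, β i → Prop) (u : β i₀) (v : ∀ j : {j // j ≠ i₀}, β j) :
    (∀ i, P i ((Equiv.piSplitAt i₀ β).symm (u, v) i)) ↔
      P i₀ u ∧ ∀ j : {j // j ≠ i₀}, P j (v j) := by
  refine ⟨fun h => ⟨by simpa using h i₀, fun j => by simpa [j.2] using h j⟩, ?_⟩
  rintro ⟨hu, hv⟩ i
  rcases eq_or_ne i i₀ with rfl | hi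
  · simpa using hu
  · simpa [hi] using hv ⟨i, hi⟩

section ForcedQuery

variable {I : Type} [Fintype I] [DecidableEq I] {M : I → Type} [∀ i, DecidableEq (M i)]
  {O : I → Type} [∀ i, Fintype (O i)] [∀ i, DecidableEq (O i)] (i₀ : I)

theorem sum_filter_forall_mem_eq_sum_piSplitAt (V : Finset I) (a : ∀ i, O i)
    (f : (∀ i, O i) → ℝ) :
    ∑ a' ∈ univ.filter (fun a' => ∀ i ∈ V, a' i = a i), f a'
      = ∑ y ∈ univ.filter (fun y => i₀ ∈ V → y = a i₀),
          ∑ b ∈ univ.filter (fun b : ∀ j : {j // j ≠ i₀}, O j => ∀ j, j.1 ∈ V → b j = a j),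
            f ((Equiv.piSplitAt i₀ O).symm (y, b)) := by
  rw [sum_filter, ← (Equiv.piSplitAt i₀ O).symm.sum_comp, Fintype.sum_prod_type, sum_filter]
  refine sum_congr rfl fun y _ => ?_
  have hsplit := Equiv.forall_piSplitAt_symm_apply_iff i₀ (fun i z => i ∈ V → z = a i) y
  simp_rw [sum_filter, hsplit, ite_and]
  split_ifs <;> simp

variable (one : ∀ i, M i)

def forcedResponse (c b : ∀ j : {j // j ≠ i₀}, O j) (d : M i₀ → O i₀) : ∀ i, M i → O i :=
  (Equiv.piSplitAt i₀ (fun i => M i → O i)).symm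
    (d, fun j xj => if xj = one j then c j else b j)

theorem sum_filter_forcedResponse [∀ i, Fintype (M i)] (c : ∀ j : {j // j ≠ i₀}, O j)
    (W : (∀ j : {j // j ≠ i₀}, O j) → (M i₀ → O i₀) → ℝ) (x : ∀ i, M i) (a : ∀ i, O i) :
    ∑ l ∈ univ.filter (fun l : _ × _ => ∀ i, forcedResponse i₀ one c l.1 l.2 i (x i) = a i),
        W l.1 l.2
      = if ∀ j : {j // j ≠ i₀}, x j = one j → c j = a j then
          ∑ b ∈ univ.filter (fun b : ∀ j : {j // j ≠ i₀}, O j =>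
              ∀ j : {j // j ≠ i₀}, x j ≠ one j → b j = a j),
            ∑ d ∈ univ.filter (fun d : M i₀ → O i₀ => d (x i₀) = a i₀), W b d
        else 0 := by
  simp_rw [forcedResponse,
    Equiv.forall_piSplitAt_symm_apply_iff i₀ (fun i (z : M i → O i) => z (x i) = a i)]
  split_ifs with hA
  · rw [← sum_product', ← filter_product, univ_product_univ]
    refine sum_congr (filter_congr fun l _ => ?_) fun _ _ => rfl
    refine and_comm.trans (and_congr_left' (forall_congr' fun j => ?_))
    by_cases hj : x j = one j <;> simp [hj, hA j]
  · push Not at hA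
    obtain ⟨j, hj, hca⟩ := hA
    refine sum_eq_zero fun l hl => absurd ?_ hca
    simpa [hj] using (mem_filter.1 hl).2.2 j

theorem LocalAgency.eq_ite_sum_update {q : (∀ i, M i) → (∀ i, O i) → ℝ} (hqLA : LocalAgency q)
    (ρ : ∀ i, M i) (hρ : ∀ i ≠ i₀, ∀ y, y ≠ one i → y = ρ i) (c : ∀ j : {j // j ≠ i₀}, O j)
    (hc : ∀ x a (j : {j // j ≠ i₀}), x j = one j → a j ≠ c j → q x a = 0)
    (x : ∀ i, M i) (a : ∀ i, O i) :
    q x a = if ∀ j : {j // j ≠ i₀}, x j = one j → c j = a j then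
        ∑ b ∈ univ.filter (fun b : ∀ j : {j // j ≠ i₀}, O j =>
            ∀ j : {j // j ≠ i₀}, x j ≠ one j → b j = a j),
          q (Function.update ρ i₀ (x i₀)) ((Equiv.piSplitAt i₀ O).symm (a i₀, b))
      else 0 := by
  split_ifs with hA
  · set V := univ.filter (fun i => i = i₀ ∨ x i ≠ one i)
    have hxV : ∀ i ∈ V, x i = Function.update ρ i₀ (x i₀) i := by
      intro i hi
      rcases eq_or_ne i i₀ with rfl | hi₀
      · simp
      · rw [Function.update_of_ne hi₀]
        exact hρ i hi₀ _ (by simpa [V, hi₀] using hi)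
    calc q x a = ∑ a' ∈ univ.filter (fun a' => ∀ i ∈ V, a' i = a i), q x a' := by
          refine (sum_eq_single_of_mem a (by simp) fun a' ha' hne => ?_).symm
          obtain ⟨i, hi⟩ := Function.ne_iff.1 hne
          have hiV : i ∉ V := fun hiV => hi ((mem_filter.1 ha').2 i hiV)
          simp only [V, mem_filter, mem_univ, true_and, not_or, not_not] at hiV
          exact hc x a' ⟨i, hiV.1⟩ hiV.2 (hA ⟨i, hiV.1⟩ hiV.2 ▸ hi)
      _ = ∑ a' ∈ univ.filter (fun a' => ∀ i ∈ V, a' i = a i),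
            q (Function.update ρ i₀ (x i₀)) a' := hqLA V _ _ hxV a
      _ = _ := by
          rw [sum_filter_forall_mem_eq_sum_piSplitAt i₀]
          simp +contextual [V, filter_eq']
  · push Not at hA
    obtain ⟨j, hj, hca⟩ := hA
    exact hc x a j hj (Ne.symm hca)

theorem LocalAgency.exists_isJointFor [∀ i, Fintype (M i)] {q : (∀ i, M i) → (∀ i, O i) → ℝ}
    (hq0 : ∀ x a, 0 ≤ q x a) (hq1 : ∀ x, ∑ a, q x a = 1) (hqLA : LocalAgency q)
    (ρ : ∀ i, M i) (hρ : ∀ i ≠ i₀, ∀ y, y ≠ one i → y = ρ i) (c : ∀ j : {j // j ≠ i₀}, O j)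
    (hc : ∀ x a (j : {j // j ≠ i₀}), x j = one j → a j ≠ c j → q x a = 0) :
    ∃ J, IsJointFor q J := by
  -- The hidden variable is `(b, d)`: `b` the friends' outcomes at `ρ`, `d m` the answer of `i₀`
  -- to `m`, coupled so that `(b, d m)` has the law of `q` at the context `update ρ i₀ m`.
  let e := Equiv.piSplitAt i₀ O
  let r : M i₀ → (∀ j : {j // j ≠ i₀}, O j) → O i₀ → ℝ :=
    fun m b y => q (Function.update ρ i₀ m) (e.symm (y, b))
  let μ : (∀ j : {j // j ≠ i₀}, O j) → ℝ := fun b => ∑ y, q ρ (e.symm (y, b))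
  have hr0 : ∀ m b y, 0 ≤ r m b y := fun _ _ _ => hq0 _ _
  obtain ⟨a₀⟩ : Nonempty (∀ i, O i) :=
    univ_nonempty_iff.1 (nonempty_of_sum_ne_zero (by rw [hq1 ρ]; exact one_ne_zero))
  have hmarg : ∀ x b, ∑ y, q x (e.symm (y, b)) =
      ∑ a' ∈ univ.filter (fun a' => ∀ i ∈ univ.erase i₀, a' i = e.symm (a₀ i₀, b) i), q x a' := by
    intro x b
    have hb : ∀ b' : ∀ j : {j // j ≠ i₀}, O j,
        (∀ j : {j // j ≠ i₀}, j.1 ∈ univ.erase i₀ → b' j = e.symm (a₀ i₀, b) j) ↔ b' = b :=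
      fun b' => (forall_congr' fun j => by simp [e, j.2]).trans funext_iff.symm
    rw [sum_filter_forall_mem_eq_sum_piSplitAt i₀, filter_congr fun b' _ => hb b', filter_eq']
    simp [e]
  have hrμ : ∀ m b, ∑ y, r m b y = μ b := fun m b => by
    simp only [r, μ]
    rw [hmarg, hmarg, hqLA _ _ _ (fun i hi => Function.update_of_ne (ne_of_mem_erase hi) _ _)]
  refine ⟨_, isJointFor_map (w := fun l : _ × (M i₀ → O i₀) => condIndepCoupling μ r l.1 l.2)
    (fun l => condIndepCoupling_nonneg (fun b => sum_nonneg fun y _ => hq0 _ _) hr0 l.1 l.2) ?_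
    (fun l => forcedResponse i₀ one c l.1 l.2) fun x a => ?_⟩
  · rw [Fintype.sum_prod_type]
    simp_rw [sum_condIndepCoupling hrμ]
    rw [sum_comm, ← Fintype.sum_prod_type', e.symm.sum_comp, hq1]
  · rw [sum_filter_forcedResponse, hqLA.eq_ite_sum_update i₀ one ρ hρ c hc]
    simp_rw [sum_filter_condIndepCoupling hr0 hrμ]
    rfl

end ForcedQuery

/-- in the canonical scenario where exactly one party `i₀` lacks a friend
(and has arbitrarily many inputs) while every other party has a friend and exactly two
inputs, every Local Friendliness behaviour is LHV-modelable. -/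
theorem lf_eq_bell_one_friendless {I : Type} [Fintype I] [DecidableEq I]
    {M : I → Type} [∀ i, Fintype (M i)] [∀ i, DecidableEq (M i)]
    {O : I → Type} [∀ i, Fintype (O i)] [∀ i, DecidableEq (O i)]
    (i₀ : I) (F : Finset I) (hF : ∀ i, i ∈ F ↔ i ≠ i₀)
    (one : ∀ i, M i) (hM : ∀ i, i ≠ i₀ → Fintype.card (M i) = 2)
    (p : (∀ i, M i) → (∀ i, O i) → ℝ) (h : IsLF F one p) : IsLHVFin p := by
  obtain ⟨P, Q, hP0, hP1, hQ0, hQ1, hQLA, hQforce, hp⟩ := h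
  have hother : ∀ i, ∃ r : M i, i ≠ i₀ → ∀ y, y ≠ one i → y = r := fun i => by
    by_cases hi : i = i₀
    · exact ⟨one i, fun h => (h hi).elim⟩
    · obtain ⟨r, -, hr⟩ := (Nat.card_eq_two_iff' (one i)).1
        (by rw [Nat.card_eq_fintype_card, hM i hi])
      exact ⟨r, fun _ y hy => hr y hy⟩
  choose ρ hρ using hother
  have hJ : ∀ c, ∃ J, IsJointFor (Q c) J := fun c =>
    (hQLA c).exists_isJointFor i₀ one (hQ0 c) (hQ1 c) ρ hρ (fun j => c ⟨j, (hF j).2 j.2⟩)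
      fun x a j hx ha => hQforce c x a ⟨⟨j, (hF j).2 j.2⟩, hx, ha⟩
  choose J hJ using hJ
  exact (IsJointFor.sum_mul hP0 hP1 hJ hp).isLHVFin
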